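/- arXiv:0907.3533 — 5 statements merged into one kernel-verified Lean document; each statement's English description precedes it below -/
import Mathlib

section
/- Let f : ℝ³ → ℝ³ and h : ℝ³ → ℝ³ be maps satisfying h ∘ f = L ∘ h and sup_{x ∈ ℝ³} ‖h(x) − x‖ ≤ K for some constant K ≥ 0. Suppose a, b ∈ ℝ³, C ≥ 0 and 0 < λ₊ < λ are such that ‖fⁿ(a) − fⁿ(b)‖ ≤ C·λ₊ⁿ for all n ≥ 0. Then the Eˢᵘ-component of h(a) − h(b) in the decomposition ℝ³ = Eˢ ⊕ Eʷᵘ ⊕ Eˢᵘ is zero, i.e. h(a) − h(b) ∈ Eˢ ⊕ Eʷᵘ. -/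
/-- Under the linear model `L` on ℝ³ with splitting
`ℝ³ = Eˢ ⊕ Eʷᵘ ⊕ Eˢᵘ` (eigenvalues ν < 1 < μ < λ), if `h ∘ f = L ∘ h` with
`h` at bounded distance from the identity, and the iterates of `f` separate
`a` and `b` at rate at most `C·λ₊ⁿ` with `λ₊ < λ`, then `h a - h b` has zero
`Eˢᵘ`-component, i.e. `h a - h b ∈ Eˢ ⊕ Eʷᵘ`. -/
theorem stmt0
    (ν μ lam : ℝ) (hν0 : 0 < ν) (hν1 : ν < 1) (hμ1 : 1 < μ) (hμlam : μ < lam)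
    (L : EuclideanSpace ℝ (Fin 3) →ₗ[ℝ] EuclideanSpace ℝ (Fin 3))
    (Es Ewu Esu : Submodule ℝ (EuclideanSpace ℝ (Fin 3)))
    (hdims : Module.finrank ℝ Es = 1)
    (hdimwu : Module.finrank ℝ Ewu = 1)
    (hdimsu : Module.finrank ℝ Esu = 1)
    (hspan : Es ⊔ Ewu ⊔ Esu = ⊤)
    (hind1 : Es ⊓ Ewu = ⊥)
    (hind2 : (Es ⊔ Ewu) ⊓ Esu = ⊥)
    (hLs : ∀ v ∈ Es, L v = ν • v)
    (hLwu : ∀ v ∈ Ewu, L v = μ • v)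
    (hLsu : ∀ v ∈ Esu, L v = lam • v)
    (f h : EuclideanSpace ℝ (Fin 3) → EuclideanSpace ℝ (Fin 3))
    (hconj : ∀ x, h (f x) = L (h x))
    (K : ℝ) (hK : 0 ≤ K)
    (hclose : ∀ x, ‖h x - x‖ ≤ K)
    (a b : EuclideanSpace ℝ (Fin 3))
    (C lamp : ℝ) (hC : 0 ≤ C) (hlamp0 : 0 < lamp) (hlamp : lamp < lam)
    (hgrowth : ∀ n : ℕ, ‖f^[n] a - f^[n] b‖ ≤ C * lamp ^ n) :
    h a - h b ∈ Es ⊔ Ewu := by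
  have hμ0 : (0:ℝ) < μ := lt_trans one_pos hμ1
  have hlam0 : (0:ℝ) < lam := lt_trans hμ0 hμlam
  -- decompose w := h a - h b
  have hw : h a - h b ∈ (Es ⊔ Ewu) ⊔ Esu := by rw [hspan]; trivial
  obtain ⟨p, hp, q, hq, hpq⟩ := Submodule.mem_sup.mp hw
  obtain ⟨s, hs, u, hu, hsu⟩ := Submodule.mem_sup.mp hp
  -- eigenvalue iteration
  have eig : ∀ (c : ℝ) (v : EuclideanSpace ℝ (Fin 3)), L v = c • v →
      ∀ n : ℕ, (L ^ n) v = c ^ n • v := by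
    intro c v hv n
    induction n with
    | zero => simp
    | succ n ih =>
      rw [pow_succ, Module.End.mul_apply, hv, map_smul, ih, smul_smul, ← pow_succ']
  -- conjugacy iteration
  have hiter : ∀ (n : ℕ) (x : EuclideanSpace ℝ (Fin 3)),
      h (f^[n] x) = (L ^ n) (h x) := by
    intro n
    induction n with
    | zero => intro x; simp
    | succ n ih =>
      intro x
      rw [Function.iterate_succ_apply', hconj, ih, pow_succ', Module.End.mul_apply]
  -- norm bound on L^n (h a - h b)
  have hbound : ∀ n : ℕ, ‖(L ^ n) (h a - h b)‖ ≤ K + K + C * lamp ^ n := by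
    intro n
    have : (L ^ n) (h a - h b) = (h (f^[n] a) - f^[n] a) + (f^[n] a - f^[n] b)
        - (h (f^[n] b) - f^[n] b) := by
      rw [map_sub, ← hiter, ← hiter]; abel
    rw [this]
    calc _ ≤ ‖(h (f^[n] a) - f^[n] a) + (f^[n] a - f^[n] b)‖ + ‖h (f^[n] b) - f^[n] b‖ :=
          norm_sub_le _ _
      _ ≤ ‖h (f^[n] a) - f^[n] a‖ + ‖f^[n] a - f^[n] b‖ + ‖h (f^[n] b) - f^[n] b‖ := by
          gcongr; exact norm_add_le _ _
      _ ≤ K + C * lamp ^ n + K := by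
          gcongr
          · exact hclose _
          · exact hgrowth n
          · exact hclose _
      _ = K + K + C * lamp ^ n := by ring
  -- key inequality
  have hkey : ∀ n : ℕ, ‖q‖ ≤ (K + K) * (1 / lam) ^ n + C * (lamp / lam) ^ n
      + ‖s‖ * (ν / lam) ^ n + ‖u‖ * (μ / lam) ^ n := by
    intro n
    have hLn : (L ^ n) (h a - h b) = ν ^ n • s + μ ^ n • u + lam ^ n • q := by
      rw [← hpq, ← hsu, map_add, map_add, eig ν s (hLs s hs), eig μ u (hLwu u hu),
        eig lam q (hLsu q hq)]
    have hq' : lam ^ n • q = (L ^ n) (h a - h b) - ν ^ n • s - μ ^ n • u := by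
      rw [hLn]; abel
    have hA : ‖lam ^ n • q‖ ≤ ‖(L ^ n) (h a - h b)‖ + ‖ν ^ n • s‖ + ‖μ ^ n • u‖ := by
      rw [hq']
      calc ‖(L ^ n) (h a - h b) - ν ^ n • s - μ ^ n • u‖
          ≤ ‖(L ^ n) (h a - h b) - ν ^ n • s‖ + ‖μ ^ n • u‖ := norm_sub_le _ _
        _ ≤ ‖(L ^ n) (h a - h b)‖ + ‖ν ^ n • s‖ + ‖μ ^ n • u‖ := by
            gcongr
            exact norm_sub_le _ _
    have h1 : lam ^ n * ‖q‖ ≤ K + K + C * lamp ^ n + ν ^ n * ‖s‖ + μ ^ n * ‖u‖ := by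
      rw [norm_smul, norm_smul, norm_smul, Real.norm_eq_abs, Real.norm_eq_abs,
        Real.norm_eq_abs, abs_of_pos (pow_pos hlam0 n), abs_of_pos (pow_pos hν0 n),
        abs_of_pos (pow_pos hμ0 n)] at hA
      linarith [hbound n]
    have hln : (0:ℝ) < lam ^ n := pow_pos hlam0 n
    rw [div_pow, div_pow, div_pow, div_pow, one_pow]
    have h2 : ‖q‖ ≤ (K + K + C * lamp ^ n + ν ^ n * ‖s‖ + μ ^ n * ‖u‖) / lam ^ n := by
      rw [le_div_iff₀ hln, mul_comm]
      exact h1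
    calc ‖q‖ ≤ (K + K + C * lamp ^ n + ν ^ n * ‖s‖ + μ ^ n * ‖u‖) / lam ^ n := h2
      _ = (K + K) * (1 / lam ^ n) + C * (lamp ^ n / lam ^ n)
          + ‖s‖ * (ν ^ n / lam ^ n) + ‖u‖ * (μ ^ n / lam ^ n) := by ring
  -- the right-hand side tends to 0
  have htend : Filter.Tendsto (fun n : ℕ => (K + K) * (1 / lam) ^ n + C * (lamp / lam) ^ n
      + ‖s‖ * (ν / lam) ^ n + ‖u‖ * (μ / lam) ^ n) Filter.atTop (nhds 0) := by
    have hr : ∀ r : ℝ, 0 ≤ r → r < lam →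
        Filter.Tendsto (fun n : ℕ => (r / lam) ^ n) Filter.atTop (nhds 0) := by
      intro r hr0 hrlam
      apply tendsto_pow_atTop_nhds_zero_of_lt_one (by positivity)
      rw [div_lt_one hlam0]; exact hrlam
    have := ((((hr 1 zero_le_one (lt_trans hμ1 hμlam)).const_mul (K + K)).add
      ((hr lamp hlamp0.le hlamp).const_mul C)).add
      ((hr ν hν0.le (by linarith)).const_mul ‖s‖)).add
      ((hr μ hμ0.le hμlam).const_mul ‖u‖)
    simpa using this
  have hq0 : ‖q‖ ≤ 0 := ge_of_tendsto' htend hkey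
  have : q = 0 := by simpa using norm_le_zero_iff.mp hq0
  rw [← hpq, this, add_zero]
  exact hp
end

section
/- Let f : ℝ³ → ℝ³ and h : ℝ³ → ℝ³ be maps satisfying h ∘ f = L ∘ h and sup_{x ∈ ℝ³} ‖h(x) − x‖ ≤ K for some constant K ≥ 0. If a, b ∈ ℝ³ are such that h(a) − h(b) ∈ Eˢ ⊕ Eʷᵘ, then there exists a constant C ≥ 0 such that ‖fⁿ(a) − fⁿ(b)‖ ≤ C·μⁿ for all n ≥ 0. -/
/-- Under the linear model `L` on ℝ³ with splitting
`ℝ³ = Eˢ ⊕ Eʷᵘ ⊕ Eˢᵘ` (eigenvalues ν < 1 < μ < λ), if `h ∘ f = L ∘ h` with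
`h` at bounded distance from the identity, and `h a - h b ∈ Eˢ ⊕ Eʷᵘ`,
then `‖fⁿ(a) - fⁿ(b)‖ ≤ C·μⁿ` for some constant `C ≥ 0` and all `n ≥ 0`. -/
theorem stmt1
    (ν μ lam : ℝ) (hν0 : 0 < ν) (hν1 : ν < 1) (hμ1 : 1 < μ) (hμlam : μ < lam)
    (L : EuclideanSpace ℝ (Fin 3) →ₗ[ℝ] EuclideanSpace ℝ (Fin 3))
    (Es Ewu Esu : Submodule ℝ (EuclideanSpace ℝ (Fin 3)))
    (hdims : Module.finrank ℝ Es = 1)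
    (hdimwu : Module.finrank ℝ Ewu = 1)
    (hdimsu : Module.finrank ℝ Esu = 1)
    (hspan : Es ⊔ Ewu ⊔ Esu = ⊤)
    (hind1 : Es ⊓ Ewu = ⊥)
    (hind2 : (Es ⊔ Ewu) ⊓ Esu = ⊥)
    (hLs : ∀ v ∈ Es, L v = ν • v)
    (hLwu : ∀ v ∈ Ewu, L v = μ • v)
    (hLsu : ∀ v ∈ Esu, L v = lam • v)
    (f h : EuclideanSpace ℝ (Fin 3) → EuclideanSpace ℝ (Fin 3))
    (hconj : ∀ x, h (f x) = L (h x))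
    (K : ℝ) (hK : 0 ≤ K)
    (hclose : ∀ x, ‖h x - x‖ ≤ K)
    (a b : EuclideanSpace ℝ (Fin 3))
    (hab : h a - h b ∈ Es ⊔ Ewu) :
    ∃ C : ℝ, 0 ≤ C ∧ ∀ n : ℕ, ‖f^[n] a - f^[n] b‖ ≤ C * μ ^ n := by
  obtain ⟨s, hs, w, hw, hsw⟩ := Submodule.mem_sup.mp hab
  refine ⟨2 * K + ‖s‖ + ‖w‖, by positivity, fun n => ?_⟩
  -- h(fⁿ x) = Lⁿ (h x)
  have hiter : ∀ x n, h (f^[n] x) = (L ^ n) (h x) := by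
    intro x n
    induction n with
    | zero => simp
    | succ n ih =>
        rw [Function.iterate_succ_apply', hconj, ih, ← Module.End.mul_apply, ← pow_succ']
  have hLn : (L ^ n) (h a - h b) = ν ^ n • s + μ ^ n • w := by
    rw [← hsw]
    induction n with
    | zero => simp
    | succ n ih =>
        rw [pow_succ', Module.End.mul_apply, ih, map_add, LinearMap.map_smul,
          LinearMap.map_smul, hLs s hs, hLwu w hw, smul_smul, smul_smul,
          pow_succ, pow_succ]
  have h1 : h (f^[n] a) - h (f^[n] b) = ν ^ n • s + μ ^ n • w := by
    rw [hiter, hiter, ← map_sub, hLn]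
  have hνn : ν ^ n ≤ 1 := pow_le_one₀ hν0.le hν1.le
  have hμn : (1:ℝ) ≤ μ ^ n := one_le_pow₀ hμ1.le
  have hnorm : ‖h (f^[n] a) - h (f^[n] b)‖ ≤ μ ^ n * (‖s‖ + ‖w‖) := by
    rw [h1]
    calc ‖ν ^ n • s + μ ^ n • w‖ ≤ ‖ν ^ n • s‖ + ‖μ ^ n • w‖ := norm_add_le _ _
      _ = ν ^ n * ‖s‖ + μ ^ n * ‖w‖ := by
            rw [norm_smul, norm_smul, Real.norm_eq_abs, Real.norm_eq_abs,
              abs_of_pos (pow_pos hν0 n), abs_of_pos (pow_pos (by linarith) n)]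
      _ ≤ μ ^ n * ‖s‖ + μ ^ n * ‖w‖ := by
            have : ν ^ n ≤ μ ^ n := le_trans hνn hμn
            nlinarith [norm_nonneg s]
      _ = μ ^ n * (‖s‖ + ‖w‖) := by ring
  have key : ‖f^[n] a - f^[n] b‖ ≤
      ‖h (f^[n] a) - f^[n] a‖ + ‖h (f^[n] a) - h (f^[n] b)‖ + ‖h (f^[n] b) - f^[n] b‖ := by
    have t1 := norm_sub_le_norm_sub_add_norm_sub (f^[n] a) (h (f^[n] a)) (f^[n] b)
    have t2 := norm_sub_le_norm_sub_add_norm_sub (h (f^[n] a)) (h (f^[n] b)) (f^[n] b)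
    have e : ‖f^[n] a - h (f^[n] a)‖ = ‖h (f^[n] a) - f^[n] a‖ := norm_sub_rev _ _
    linarith
  have hc1 := hclose (f^[n] a)
  have hc2 := hclose (f^[n] b)
  have : ‖f^[n] a - f^[n] b‖ ≤ 2 * K + μ ^ n * (‖s‖ + ‖w‖) := by linarith
  calc ‖f^[n] a - f^[n] b‖ ≤ 2 * K + μ ^ n * (‖s‖ + ‖w‖) := this
    _ ≤ μ ^ n * (2 * K) + μ ^ n * (‖s‖ + ‖w‖) := by nlinarith
    _ = (2 * K + ‖s‖ + ‖w‖) * μ ^ n := by ring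
end

section
/- Let f : ℝ³ → ℝ³ and h : ℝ³ → ℝ³ be maps satisfying h ∘ f = L ∘ h and sup_{x ∈ ℝ³} ‖h(x) − x‖ ≤ K for some constant K ≥ 0. Then there exist no points a, b ∈ ℝ³ and constants c > 0 and λ₋ > λ such that ‖fⁿ(a) − fⁿ(b)‖ ≥ c·λ₋ⁿ for all n ≥ 0. -/
/-- Under the linear model `L` on ℝ³ with splitting
`ℝ³ = Eˢ ⊕ Eʷᵘ ⊕ Eˢᵘ` (eigenvalues ν < 1 < μ < λ), if `h ∘ f = L ∘ h` with
`h` at bounded distance from identity, then no pair of points `a`, `b` can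
separate under the iterates of `f` at a rate `c·λ₋ⁿ` with `λ₋ > λ`. -/
theorem stmt2
    (ν μ lam : ℝ) (hν0 : 0 < ν) (hν1 : ν < 1) (hμ1 : 1 < μ) (hμlam : μ < lam)
    (L : EuclideanSpace ℝ (Fin 3) →ₗ[ℝ] EuclideanSpace ℝ (Fin 3))
    (Es Ewu Esu : Submodule ℝ (EuclideanSpace ℝ (Fin 3)))
    (hdims : Module.finrank ℝ Es = 1)
    (hdimwu : Module.finrank ℝ Ewu = 1)
    (hdimsu : Module.finrank ℝ Esu = 1)
    (hspan : Es ⊔ Ewu ⊔ Esu = ⊤)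
    (hind1 : Es ⊓ Ewu = ⊥)
    (hind2 : (Es ⊔ Ewu) ⊓ Esu = ⊥)
    (hLs : ∀ v ∈ Es, L v = ν • v)
    (hLwu : ∀ v ∈ Ewu, L v = μ • v)
    (hLsu : ∀ v ∈ Esu, L v = lam • v)
    (f h : EuclideanSpace ℝ (Fin 3) → EuclideanSpace ℝ (Fin 3))
    (hconj : ∀ x, h (f x) = L (h x))
    (K : ℝ) (hK : 0 ≤ K)
    (hclose : ∀ x, ‖h x - x‖ ≤ K) :
    ¬ ∃ (a b : EuclideanSpace ℝ (Fin 3)) (c lamm : ℝ), 0 < c ∧ lam < lamm ∧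
        ∀ n : ℕ, c * lamm ^ n ≤ ‖f^[n] a - f^[n] b‖ := by
  rintro ⟨a, b, c, lamm, hc, hlm, hsep⟩
  have hlam0 : (0:ℝ) < lam := lt_trans (lt_trans one_pos hμ1) hμlam
  have hlam1 : (1:ℝ) < lam := lt_trans hμ1 hμlam
  -- h ∘ f^[n] = L^n ∘ h
  have hiter : ∀ x n, h (f^[n] x) = (L ^ n) (h x) := by
    intro x n
    induction n with
    | zero => simp
    | succ n ih =>
      rw [Function.iterate_succ_apply', hconj, ih, pow_succ', Module.End.mul_apply]
  -- eigenvalue iterates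
  have eig : ∀ (t : ℝ) (E : Submodule ℝ (EuclideanSpace ℝ (Fin 3))),
      (∀ v ∈ E, L v = t • v) → ∀ v ∈ E, ∀ n : ℕ, (L ^ n) v = t ^ n • v := by
    intro t E hE v hv n
    induction n with
    | zero => simp
    | succ n ih =>
      rw [pow_succ, Module.End.mul_apply, hE v hv, map_smul, ih, smul_smul, pow_succ]
      ring_nf
  -- decompose w := h a - h b
  set w := h a - h b with hwdef
  have hwmem : w ∈ Es ⊔ Ewu ⊔ Esu := by rw [hspan]; trivial
  obtain ⟨y, hy, s, hs, hys⟩ := Submodule.mem_sup.mp hwmem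
  obtain ⟨u, hu, v, hv, huv⟩ := Submodule.mem_sup.mp hy
  set M := ‖u‖ + ‖v‖ + ‖s‖ with hM
  have hM0 : 0 ≤ M := by positivity
  -- bound on L^n w
  have hbound : ∀ n : ℕ, ‖(L ^ n) w‖ ≤ M * lam ^ n := by
    intro n
    have hw : (L ^ n) w = ν ^ n • u + μ ^ n • v + lam ^ n • s := by
      rw [← hys, ← huv, map_add, map_add, eig ν Es hLs u hu n, eig μ Ewu hLwu v hv n,
        eig lam Esu hLsu s hs n]
    rw [hw]
    have h1 : ‖ν ^ n • u + μ ^ n • v + lam ^ n • s‖ ≤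
        ‖ν ^ n • u‖ + ‖μ ^ n • v‖ + ‖lam ^ n • s‖ :=
      le_trans (norm_add_le _ _) (by gcongr; exact norm_add_le _ _)
    refine h1.trans ?_
    rw [norm_smul, norm_smul, norm_smul]
    have hν : ‖(ν:ℝ) ^ n‖ ≤ lam ^ n := by
      rw [Real.norm_eq_abs, abs_of_pos (pow_pos hν0 n)]
      exact pow_le_pow_left₀ hν0.le (le_of_lt (lt_trans (lt_trans hν1 hμ1) hμlam)) n
    have hμ : ‖(μ:ℝ) ^ n‖ ≤ lam ^ n := by
      rw [Real.norm_eq_abs, abs_of_pos (pow_pos (lt_trans one_pos hμ1) n)]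
      exact pow_le_pow_left₀ (le_of_lt (lt_trans one_pos hμ1)) hμlam.le n
    have hl : ‖(lam:ℝ) ^ n‖ = lam ^ n := by
      rw [Real.norm_eq_abs, abs_of_pos (pow_pos hlam0 n)]
    rw [hl, hM]
    nlinarith [norm_nonneg u, norm_nonneg v, norm_nonneg s, norm_nonneg (ν ^ n • u),
      pow_pos hlam0 n]
  -- distance estimate
  have hdist : ∀ n : ℕ, ‖f^[n] a - f^[n] b‖ ≤ 2 * K + M * lam ^ n := by
    intro n
    have e1 : f^[n] a - f^[n] b =
        (f^[n] a - h (f^[n] a)) + ((L ^ n) w) + (h (f^[n] b) - f^[n] b) := by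
      rw [hwdef, map_sub, ← hiter a n, ← hiter b n]; abel
    rw [e1]
    have t1 : ‖(f^[n] a - h (f^[n] a)) + ((L ^ n) w) + (h (f^[n] b) - f^[n] b)‖ ≤
        ‖f^[n] a - h (f^[n] a)‖ + ‖(L ^ n) w‖ + ‖h (f^[n] b) - f^[n] b‖ :=
      le_trans (norm_add_le _ _) (by gcongr; exact norm_add_le _ _)
    refine t1.trans ?_
    have c1 : ‖f^[n] a - h (f^[n] a)‖ ≤ K := by rw [norm_sub_rev]; exact hclose _
    have c2 : ‖h (f^[n] b) - f^[n] b‖ ≤ K := hclose _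
    have := hbound n
    linarith
  -- contradiction
  set r := lamm / lam with hr
  have hr1 : (1:ℝ) < r := (one_lt_div hlam0).mpr hlm
  obtain ⟨n, hn⟩ := pow_unbounded_of_one_lt ((2 * K + M) / c) hr1
  have hln : (1:ℝ) ≤ lam ^ n := one_le_pow₀ hlam1.le
  have key : c * lamm ^ n ≤ 2 * K + M * lam ^ n := le_trans (hsep n) (hdist n)
  have hlamm : lamm ^ n = r ^ n * lam ^ n := by
    rw [hr, div_pow, div_mul_cancel₀]
    exact ne_of_gt (pow_pos hlam0 n)
  have key2 : c * r ^ n * lam ^ n ≤ (2 * K + M) * lam ^ n := by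
    calc c * r ^ n * lam ^ n = c * lamm ^ n := by rw [hlamm]; ring
      _ ≤ 2 * K + M * lam ^ n := key
      _ ≤ (2 * K + M) * lam ^ n := by nlinarith
  have key3 : c * r ^ n ≤ 2 * K + M :=
    le_of_mul_le_mul_right (by linarith [key2]) (pow_pos hlam0 n)
  have : (2 * K + M) / c < r ^ n := hn
  rw [div_lt_iff₀ hc] at this
  nlinarith
end

section
/- For all x, y ∈ ℝ the infinite product ρ_x(y) = ∏_{n≥1} f′(f⁻ⁿ(x))/f′(f⁻ⁿ(y)) converges (i.e. the partial products ∏_{n=1}^{N} f′(f⁻ⁿ(x))/f′(f⁻ⁿ(y)) have a limit as N → ∞), its value is a strictly positive real number, and the function (x, y) ↦ ρ_x(y) is continuous on ℝ × ℝ. -/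
open Filter Real Topology
open scoped NNReal

/-!
Taking logarithms turns the product into the series `∑ φ(gⁿ⁺¹ x) - φ(gⁿ⁺¹ y)` with
`φ = log ∘ f′` and `g = f⁻¹`. Since `f′ ≥ λ₋ > 0`, `φ` is Hölder with the same exponent `α`
as `f′`, and `g` is a contraction with ratio `λ₋⁻¹ < 1`. Hence the `n`-th term is bounded
by `C · |x - y|^α · (λ₋^(-α))ⁿ`: the series converges, locally uniformly in `(x, y)`, so its
sum is continuous and `ρ` is its (positive) exponential.
-/

theorem HolderWith.of_dist_le_mul {X Y : Type*} [PseudoMetricSpace X] [PseudoMetricSpace Y]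
    {C r : ℝ≥0} {f : X → Y} (h : ∀ x y, dist (f x) (f y) ≤ C * dist x y ^ (r : ℝ)) :
    HolderWith C r f := by
  intro x y
  rw [edist_nndist, edist_nndist, ← ENNReal.coe_rpow_of_nonneg _ r.coe_nonneg,
    ← ENNReal.coe_mul, ENNReal.coe_le_coe, ← NNReal.coe_le_coe]
  simpa using h x y

theorem Real.lipschitzOnWith_log_Ici {c : ℝ≥0} (hc : 0 < c) :
    LipschitzOnWith c⁻¹ log (Set.Ici (c : ℝ)) := by
  have hc' : (0 : ℝ) < c := hc
  refine (convex_Ici _).lipschitzOnWith_of_nnnorm_deriv_le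
    (fun x hx => differentiableAt_log (hc'.trans_le hx).ne') fun x hx => ?_
  have hx0 : 0 < x := hc'.trans_le hx
  rw [← NNReal.coe_le_coe, coe_nnnorm, deriv_log, norm_inv, norm_of_nonneg hx0.le,
    NNReal.coe_inv]
  exact inv_anti₀ hc' hx

theorem HolderWith.log_comp {X : Type*} [PseudoEMetricSpace X] {C r c : ℝ≥0} {φ : X → ℝ}
    (hφ : HolderWith C r φ) (hc : 0 < c) (hφc : ∀ x, (c : ℝ) ≤ φ x) :
    HolderWith (c⁻¹ * C) r (log ∘ φ) := by
  simpa using ((lipschitzOnWith_log_Ici hc).holderOnWith).comp_holderWith hφ hφc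

theorem antilipschitzWith_of_le_deriv {f : ℝ → ℝ} (hf : Differentiable ℝ f) {c : ℝ≥0}
    (hc : 0 < c) (hfc : ∀ x, (c : ℝ) ≤ deriv f x) : AntilipschitzWith c⁻¹ f := by
  refine AntilipschitzWith.of_le_mul_dist fun x y => ?_
  wlog hxy : x ≤ y generalizing x y
  · rw [dist_comm, dist_comm (f x)]
    exact this y x (le_of_not_ge hxy)
  have hexp := mul_sub_le_image_sub_of_le_deriv hf hfc hxy
  rw [dist_comm, dist_comm (f x), Real.dist_eq, Real.dist_eq, abs_of_nonneg (sub_nonneg.2 hxy),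
    abs_of_nonneg (le_trans (by positivity) hexp), NNReal.coe_inv, ← div_eq_inv_mul,
    le_div_iff₀ (by exact_mod_cast hc)]
  linarith

theorem tendsto_prod_Icc_of_hasSum_log {a : ℕ → ℝ} (ha : ∀ n, 0 < a n) {s : ℝ}
    (h : HasSum (fun n => log (a (n + 1))) s) :
    Tendsto (fun N => ∏ n ∈ Finset.Icc 1 N, a n) atTop (𝓝 (exp s)) := by
  convert (hasProd_of_hasSum_log (fun n => ha (n + 1)) h).tendsto_prod_nat using 2 with N
  rw [Finset.range_eq_Ico, Finset.prod_Ico_add' a, zero_add, Finset.Ico_add_one_right_eq_Icc]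

theorem summable_rpow_pow_of_lt_one {r K : ℝ≥0} (hr : 0 < r) (hK : K < 1) :
    Summable fun n : ℕ => ((K : ℝ) ^ (r : ℝ)) ^ n :=
  summable_geometric_of_lt_one (by positivity)
    (rpow_lt_one K.coe_nonneg (by exact_mod_cast hK) (by exact_mod_cast hr))

section IterateSeries

variable {X : Type*} [PseudoMetricSpace X] {φ : X → ℝ} {g : X → X} {C r K : ℝ≥0}

theorem HolderWith.abs_sub_comp_iterate_le (hφ : HolderWith C r φ) (hg : LipschitzWith K g)
    (n : ℕ) (x y : X) :
    |φ (g^[n] x) - φ (g^[n] y)| ≤ C * dist x y ^ (r : ℝ) * ((K : ℝ) ^ (r : ℝ)) ^ n := by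
  calc |φ (g^[n] x) - φ (g^[n] y)| ≤ C * dist (g^[n] x) (g^[n] y) ^ (r : ℝ) :=
        hφ.dist_le _ _
    _ ≤ C * ((K : ℝ) ^ n * dist x y) ^ (r : ℝ) := by
        gcongr
        simpa using (hg.iterate n).dist_le_mul x y
    _ = C * dist x y ^ (r : ℝ) * ((K : ℝ) ^ (r : ℝ)) ^ n := by
        rw [mul_rpow (by positivity) dist_nonneg, ← Real.rpow_natCast, ← rpow_mul K.coe_nonneg,
          mul_comm (n : ℝ), rpow_mul K.coe_nonneg, Real.rpow_natCast]
        ring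

theorem HolderWith.summable_sub_comp_iterate (hφ : HolderWith C r φ) (hr : 0 < r)
    (hg : LipschitzWith K g) (hK : K < 1) (x y : X) :
    Summable fun n => φ (g^[n] x) - φ (g^[n] y) :=
  Summable.of_norm_bounded ((summable_rpow_pow_of_lt_one hr hK).mul_left _)
    (hφ.abs_sub_comp_iterate_le hg · x y)

theorem HolderWith.continuous_tsum_sub_comp_iterate (hφ : HolderWith C r φ) (hr : 0 < r)
    (hg : LipschitzWith K g) (hK : K < 1) :
    Continuous fun p : X × X => ∑' n, (φ (g^[n] p.1) - φ (g^[n] p.2)) := by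
  refine continuous_iff_continuousAt.2 fun p₀ => ?_
  set d := dist p₀.1 p₀.2 + 1
  have hnear : {p : X × X | dist p.1 p.2 < d} ∈ 𝓝 p₀ :=
    (continuous_fst.dist continuous_snd).continuousAt.preimage_mem_nhds
      (Iio_mem_nhds (lt_add_one _))
  have hbound (n : ℕ) (p : X × X) (hp : p ∈ {p : X × X | dist p.1 p.2 < d}) :
      ‖φ (g^[n] p.1) - φ (g^[n] p.2)‖ ≤ C * d ^ (r : ℝ) * ((K : ℝ) ^ (r : ℝ)) ^ n := by
    refine (hφ.abs_sub_comp_iterate_le hg n p.1 p.2).trans ?_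
    gcongr C * ?_ * _
    exact rpow_le_rpow dist_nonneg (le_of_lt hp) r.coe_nonneg
  have hterm (n : ℕ) : Continuous fun p : X × X => φ (g^[n] p.1) - φ (g^[n] p.2) :=
    have hcomp := (hφ.continuous hr).comp (hg.continuous.iterate n)
    (hcomp.comp continuous_fst).sub (hcomp.comp continuous_snd)
  exact (continuousOn_tsum (fun n => (hterm n).continuousOn)
    ((summable_rpow_pow_of_lt_one hr hK).mul_left _) hbound).continuousAt hnear

end IterateSeries

theorem stmt6_general
    (f : ℝ → ℝ) (hbij : Function.Bijective f)
    (hdiff : Differentiable ℝ f)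
    (H α : ℝ) (hH : 0 ≤ H) (hα0 : 0 < α)
    (hHolder : ∀ x y : ℝ, |deriv f x - deriv f y| ≤ H * |x - y| ^ α)
    (lamm lamp : ℝ) (hlamm : 1 < lamm)
    (hderiv : ∀ x : ℝ, lamm ≤ deriv f x ∧ deriv f x ≤ lamp) :
    ∃ ρ : ℝ → ℝ → ℝ,
      Continuous (fun p : ℝ × ℝ => ρ p.1 p.2) ∧
      ∀ x y : ℝ, 0 < ρ x y ∧
        Filter.Tendsto
          (fun N : ℕ => ∏ n ∈ Finset.Icc 1 N,
            deriv f ((Function.invFun f)^[n] x) / deriv f ((Function.invFun f)^[n] y))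
          Filter.atTop (nhds (ρ x y)) := by
  set g := Function.invFun f
  set lam : ℝ≥0 := ⟨lamm, by linarith⟩
  have hlam : 0 < lam := by change (0 : ℝ) < lamm; linarith
  have hpos x : 0 < deriv f x := by linarith [(hderiv x).1]
  have hg : LipschitzWith lam⁻¹ g :=
    (antilipschitzWith_of_le_deriv hdiff hlam fun x => (hderiv x).1).to_rightInverse
      (Function.rightInverse_invFun hbij.2)
  have hK : lam⁻¹ < 1 := inv_lt_one_of_one_lt₀ (by exact_mod_cast hlamm)
  have hr : 0 < α.toNNReal := by simpa using hα0
  have hφ : HolderWith (lam⁻¹ * H.toNNReal) α.toNNReal (log ∘ deriv f) := by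
    refine HolderWith.log_comp (HolderWith.of_dist_le_mul fun x y => ?_) hlam
      fun x => (hderiv x).1
    simpa [Real.dist_eq, hH, hα0.le] using hHolder x y
  set φ := log ∘ deriv f
  refine ⟨fun x y => exp (∑' n, (φ (g^[n] (g x)) - φ (g^[n] (g y)))),
    ((hφ.continuous_tsum_sub_comp_iterate hr hg hK).comp
      (hg.continuous.prodMap hg.continuous)).rexp, fun x y => ⟨exp_pos _, ?_⟩⟩
  refine tendsto_prod_Icc_of_hasSum_log (fun n => div_pos (hpos _) (hpos _)) ?_
  convert (hφ.summable_sub_comp_iterate hr hg hK (g x) (g y)).hasSum using 2 with n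
  simp only [φ, Function.comp_apply, ← Function.iterate_succ_apply,
    log_div (hpos _).ne' (hpos _).ne']

/-- For a differentiable bijection `f : ℝ → ℝ` with α-Hölder
derivative satisfying `1 < λ₋ ≤ f′ ≤ λ₊`, the infinite product
`ρ_x(y) = ∏_{n ≥ 1} f′(f⁻ⁿ(x))/f′(f⁻ⁿ(y))` converges, is strictly positive,
and `(x, y) ↦ ρ_x(y)` is continuous on `ℝ × ℝ`. -/
theorem stmt6
    (f : ℝ → ℝ) (hbij : Function.Bijective f)
    (hdiff : Differentiable ℝ f)
    (H α : ℝ) (hH : 0 ≤ H) (hα0 : 0 < α) (hα1 : α ≤ 1)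
    (hHolder : ∀ x y : ℝ, |deriv f x - deriv f y| ≤ H * |x - y| ^ α)
    (lamm lamp : ℝ) (hlamm : 1 < lamm)
    (hderiv : ∀ x : ℝ, lamm ≤ deriv f x ∧ deriv f x ≤ lamp) :
    ∃ ρ : ℝ → ℝ → ℝ,
      Continuous (fun p : ℝ × ℝ => ρ p.1 p.2) ∧
      ∀ x y : ℝ, 0 < ρ x y ∧
        Filter.Tendsto
          (fun N : ℕ => ∏ n ∈ Finset.Icc 1 N,
            deriv f ((Function.invFun f)^[n] x) / deriv f ((Function.invFun f)^[n] y))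
          Filter.atTop (nhds (ρ x y)) :=
  stmt6_general f hbij hdiff H α hH hα0 hHolder lamm lamp hlamm hderiv
end

section
/- For all x, y ∈ ℝ, the pseudo-distance satisfies d̃(f(x), f(y)) = f′(x) · d̃(x, y). -/
/-!
Since `f⁻¹ ∘ f = id`, the partial products for the pair `(f x, f w)` are those for `(x, w)`
shifted by one step, with the extra factor `f′(x) / f′(w)` in front. Passing to the limit gives
the cocycle identity `ρ_{f x}(f w) = f′(x) / f′(w) · ρ_x(w)`, and the substitution `z = f w`
(legitimate because `f′ > 0`) cancels the factor `f′(w)` in the integral.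
-/

open Filter Topology Finset Function

theorem Finset.prod_Icc_one_succ {M : Type*} [CommMonoid M] (u : ℕ → M) (N : ℕ) :
    ∏ n ∈ Icc 1 (N + 1), u n = u 1 * ∏ n ∈ Icc 1 N, u (n + 1) := by
  induction N with
  | zero => simp
  | succ N ih => rw [prod_Icc_succ_top (by omega), ih, prod_Icc_succ_top (by omega), mul_assoc]

section IterateLeftInverse

variable {X : Type*} {f g : X → X} {φ : X → ℝ}

theorem prod_Icc_iterate_leftInverse_succ (hgf : LeftInverse g f) (a b : X) (N : ℕ) :
    ∏ n ∈ Icc 1 (N + 1), φ (g^[n] (f a)) / φ (g^[n] (f b)) =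
      φ a / φ b * ∏ n ∈ Icc 1 N, φ (g^[n] a) / φ (g^[n] b) := by
  simp only [prod_Icc_one_succ, iterate_succ_apply, hgf _, iterate_zero_apply]

theorem eq_div_mul_of_tendsto_prod_iterate_leftInverse (hgf : LeftInverse g f) {a b : X}
    {r s : ℝ}
    (hs : Tendsto (fun N : ℕ => ∏ n ∈ Icc 1 N, φ (g^[n] (f a)) / φ (g^[n] (f b)))
      atTop (𝓝 s))
    (hr : Tendsto (fun N : ℕ => ∏ n ∈ Icc 1 N, φ (g^[n] a) / φ (g^[n] b)) atTop (𝓝 r)) :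
    s = φ a / φ b * r :=
  tendsto_nhds_unique ((tendsto_add_atTop_iff_nat 1).2 hs)
    ((hr.const_mul _).congr fun N => (prod_Icc_iterate_leftInverse_succ hgf a b N).symm)

end IterateLeftInverse

theorem stmt7_general
    (f : ℝ → ℝ) (hbij : Function.Bijective f)
    (hdiff : Differentiable ℝ f)
    (lamm lamp : ℝ) (hlamm : 1 < lamm)
    (hderiv : ∀ x : ℝ, lamm ≤ deriv f x ∧ deriv f x ≤ lamp)
    (ρ : ℝ → ℝ → ℝ)
    (hρ : ∀ x y : ℝ,
      Filter.Tendsto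
        (fun N : ℕ => ∏ n ∈ Finset.Icc 1 N,
          deriv f ((Function.invFun f)^[n] x) / deriv f ((Function.invFun f)^[n] y))
        Filter.atTop (nhds (ρ x y))) :
    ∀ x y : ℝ,
      (∫ z in (f x)..(f y), ρ (f x) z) = deriv f x * ∫ z in x..y, ρ x z := by
  intro x y
  have hpos (w : ℝ) : 0 < deriv f w := (zero_lt_one.trans hlamm).trans_le (hderiv w).1
  have hcocycle (w : ℝ) : ρ (f x) (f w) = deriv f x / deriv f w * ρ x w :=
    eq_div_mul_of_tendsto_prod_iterate_leftInverse (leftInverse_invFun hbij.1) (hρ _ _) (hρ _ _)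
  rw [← intervalIntegral.integral_comp_mul_deriv_of_deriv_nonneg hdiff.continuous.continuousOn
      (fun w _ => (hdiff w).hasDerivAt) (fun w _ => (hpos w).le),
    ← intervalIntegral.integral_const_mul]
  refine intervalIntegral.integral_congr fun w _ => ?_
  rw [comp_apply, hcocycle w]
  field_simp [(hpos w).ne']

/-- For a differentiable bijection `f : ℝ → ℝ` with α-Hölder
derivative satisfying `1 < λ₋ ≤ f′ ≤ λ₊`, the pseudo-distance
`d̃(x, y) = ∫_x^y ρ_x(z) dz`, where `ρ_x(y)` is the limit of the partial
products `∏_{n=1}^N f′(f⁻ⁿ(x))/f′(f⁻ⁿ(y))`, satisfies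
`d̃(f(x), f(y)) = f′(x)·d̃(x, y)`. -/
theorem stmt7
    (f : ℝ → ℝ) (hbij : Function.Bijective f)
    (hdiff : Differentiable ℝ f)
    (H α : ℝ) (hH : 0 ≤ H) (hα0 : 0 < α) (hα1 : α ≤ 1)
    (hHolder : ∀ x y : ℝ, |deriv f x - deriv f y| ≤ H * |x - y| ^ α)
    (lamm lamp : ℝ) (hlamm : 1 < lamm)
    (hderiv : ∀ x : ℝ, lamm ≤ deriv f x ∧ deriv f x ≤ lamp)
    (ρ : ℝ → ℝ → ℝ)
    (hρ : ∀ x y : ℝ,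
      Filter.Tendsto
        (fun N : ℕ => ∏ n ∈ Finset.Icc 1 N,
          deriv f ((Function.invFun f)^[n] x) / deriv f ((Function.invFun f)^[n] y))
        Filter.atTop (nhds (ρ x y))) :
    ∀ x y : ℝ,
      (∫ z in (f x)..(f y), ρ (f x) z) = deriv f x * ∫ z in x..y, ρ x z :=
  stmt7_general f hbij hdiff lamm lamp hlamm hderiv ρ hρ
end
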